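/- For every L ≥ 1 the following block Toeplitz identity holds: T_L(Φ₁, B₁, C₁, D₁) · T_L(Φ, [B̃ K], −C, [−D I]) = T_L(Φ₁, [B_f K_f], C₁, [D_{f,1} D₁]), where B_f = B̃ − ẼG⁻D, K_f = K + ẼG⁻, and D_{f,1} = −G⁻D (here [X Y] denotes horizontal block concatenation). -/

import Mathlib

/-!
Both sides are block lower-triangular Toeplitz matrices, and the product of two such matrices is
the one whose symbol is the convolution of the two symbols. So it suffices to compare Markov
parameters: the convolution of those of `(Φ₁, B₁, C₁, D₁)` and `(Φ, [B̃ K], -C, [-D I])` is the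
impulse response of their series connection, with states `x₁` and `x₂`. As `Φ₁ = Φ + B₁ (-C)` and
`C₁ = D₁ (-C)`, the sum `z = x₁ + x₂` obeys `z⁺ = Φ₁ z + (B₂ + B₁ D₂) u`, `y = C₁ z + D₁ D₂ u`,
whose Markov parameters are those on the right.
-/

open Matrix

/-- Block lower-triangular Toeplitz matrix `T_L(A,B,C,D)` of the Markov parameters
of the system `(A,B,C,D)`. -/
def TL {α m p : Type*} [Fintype α] [DecidableEq α] (L : ℕ)
    (A : Matrix α α ℝ) (B : Matrix α m ℝ) (C : Matrix p α ℝ) (D : Matrix p m ℝ) :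
    Matrix (Fin L × p) (Fin L × m) ℝ :=
  Matrix.of fun ip jq =>
    if (ip.1 : ℕ) = (jq.1 : ℕ) then D ip.2 jq.2
    else if (jq.1 : ℕ) < (ip.1 : ℕ) then
      (C * A ^ ((ip.1 : ℕ) - (jq.1 : ℕ) - 1) * B) ip.2 jq.2
    else 0

open Finset

lemma sum_fin_ite_between_eq_sum_antidiagonal {M : Type*} [AddCommMonoid M] {L i j : ℕ}
    (hi : i < L) (hji : j ≤ i) (h : ℕ → ℕ → M) :
    ∑ k : Fin L, (if j ≤ (k : ℕ) ∧ (k : ℕ) ≤ i then h (i - k) (k - j) else 0) =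
      ∑ x ∈ antidiagonal (i - j), h x.1 x.2 := by
  rw [← sum_filter]
  refine sum_bij' (fun k _ => (i - k, k - j)) (fun x hx => ⟨j + x.2, ?_⟩) ?_ ?_ ?_ ?_ ?_
  all_goals simp_all
  all_goals intros; omega

def blockToeplitz {R p m : Type*} [Zero R] (L : ℕ) (f : ℕ → Matrix p m R) :
    Matrix (Fin L × p) (Fin L × m) R :=
  Matrix.of fun ix jy => if (jy.1 : ℕ) ≤ ix.1 then f (ix.1 - jy.1) ix.2 jy.2 else 0

lemma blockToeplitz_mul_blockToeplitz {R p q m : Type*} [NonUnitalNonAssocSemiring R]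
    [Fintype q] (L : ℕ) (f : ℕ → Matrix p q R) (g : ℕ → Matrix q m R) :
    blockToeplitz L f * blockToeplitz L g =
      blockToeplitz L fun t => ∑ x ∈ antidiagonal t, f x.1 * g x.2 := by
  ext ⟨i, x⟩ ⟨j, y⟩
  have hentry : ∀ k : Fin L,
      ∑ r, blockToeplitz L f (i, x) (k, r) * blockToeplitz L g (k, r) (j, y) =
        if (j : ℕ) ≤ k ∧ (k : ℕ) ≤ i then (f (i - k) * g (k - j)) x y else 0 := by
    intro k
    by_cases hik : k ≤ i <;> by_cases hjk : j ≤ k <;>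
      simp [blockToeplitz, hik, hjk, Matrix.mul_apply]
  simp only [Matrix.mul_apply, Fintype.sum_prod_type, hentry]
  by_cases hji : (j : ℕ) ≤ i
  · simp only [blockToeplitz, Matrix.of_apply, if_pos hji, Matrix.sum_apply]
    exact sum_fin_ite_between_eq_sum_antidiagonal i.isLt hji fun a b => (f a * g b) x y
  · simp only [blockToeplitz, Matrix.of_apply, if_neg hji]
    exact sum_eq_zero fun k _ => if_neg fun hk => hji (hk.1.trans hk.2)

def markovParameter {R : Type*} [Semiring R] {α p m : Type*} [Fintype α] [DecidableEq α]
    (A : Matrix α α R) (B : Matrix α m R) (C : Matrix p α R) (D : Matrix p m R) :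
    ℕ → Matrix p m R
  | 0 => D
  | t + 1 => C * A ^ t * B

lemma TL_eq_blockToeplitz {α m p : Type*} [Fintype α] [DecidableEq α] (L : ℕ)
    (A : Matrix α α ℝ) (B : Matrix α m ℝ) (C : Matrix p α ℝ) (D : Matrix p m ℝ) :
    TL L A B C D = blockToeplitz L (markovParameter A B C D) := by
  ext ⟨i, x⟩ ⟨j, y⟩
  simp only [TL, blockToeplitz, of_apply]
  rcases lt_trichotomy (j : ℕ) i with h | h | h
  · rw [if_neg h.ne', if_pos h, if_pos h.le, show (i : ℕ) - j = (i - j - 1) + 1 by omega]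
    rfl
  · rw [if_pos h.symm, if_pos h.le, h, Nat.sub_self]
    rfl
  · rw [if_neg h.ne, if_neg h.not_gt, if_neg h.not_ge]

lemma pow_succ_eq_add_sum_antidiagonal {S : Type*} [Semiring S] {a b c : S} (h : a = b + c)
    (t : ℕ) : a ^ (t + 1) = b ^ (t + 1) + ∑ x ∈ antidiagonal t, a ^ x.1 * c * b ^ x.2 := by
  induction t with
  | zero => simp [h]
  | succ t ih =>
    rw [pow_succ' a, ih, Nat.sum_antidiagonal_succ, mul_add, Finset.mul_sum, pow_succ' b (t + 1)]
    nth_rw 1 [h]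
    simp only [add_mul, pow_zero, one_mul, pow_succ', mul_assoc, add_assoc]

lemma sum_antidiagonal_markovParameter_mul {R : Type*} [Semiring R] {α p q m : Type*}
    [Fintype α] [DecidableEq α] [Fintype q]
    {A₁ A₂ : Matrix α α R} {B₁ : Matrix α q R} {C₁ : Matrix p α R} {D₁ : Matrix p q R}
    {B₂ : Matrix α m R} {C₂ : Matrix q α R} {D₂ : Matrix q m R}
    (hA : A₁ = A₂ + B₁ * C₂) (hC : C₁ = D₁ * C₂) (t : ℕ) :
    ∑ x ∈ antidiagonal t, markovParameter A₁ B₁ C₁ D₁ x.1 * markovParameter A₂ B₂ C₂ D₂ x.2 =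
      markovParameter A₁ (B₂ + B₁ * D₂) C₁ (D₁ * D₂) t := by
  match t with
  | 0 => simp [markovParameter]
  | 1 => simp [Nat.sum_antidiagonal_succ, markovParameter, hC, Matrix.mul_add, Matrix.mul_assoc]
  | t + 2 =>
    have hB₂ : C₁ * A₁ ^ (t + 1) * B₂ = D₁ * (C₂ * A₂ ^ (t + 1) * B₂) +
        ∑ x ∈ antidiagonal t, C₁ * A₁ ^ x.1 * B₁ * (C₂ * A₂ ^ x.2 * B₂) := by
      rw [pow_succ_eq_add_sum_antidiagonal hA, hC]
      simp only [Matrix.mul_add, Matrix.add_mul, Matrix.mul_sum, Matrix.sum_mul, Matrix.mul_assoc]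
    rw [Nat.sum_antidiagonal_succ, Nat.sum_antidiagonal_succ']
    simp only [markovParameter]
    rw [Matrix.mul_add, hB₂, Matrix.mul_assoc _ B₁ D₂]
    abel

theorem stmt13_general (n nu nf ny : ℕ)
    (Φ : Matrix (Fin n) (Fin n) ℝ) (Bt : Matrix (Fin n) (Fin nu) ℝ)
    (E : Matrix (Fin n) (Fin nf) ℝ) (K : Matrix (Fin n) (Fin ny) ℝ)
    (C : Matrix (Fin ny) (Fin n) ℝ) (D : Matrix (Fin ny) (Fin nu) ℝ)
    (Ginv : Matrix (Fin nf) (Fin ny) ℝ)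
    (Φ₁ : Matrix (Fin n) (Fin n) ℝ) (hΦ₁ : Φ₁ = Φ - E * Ginv * C)
    (B₁ : Matrix (Fin n) (Fin ny) ℝ) (hB₁ : B₁ = E * Ginv)
    (C₁ : Matrix (Fin nf) (Fin n) ℝ) (hC₁ : C₁ = -(Ginv * C))
    (D₁ : Matrix (Fin nf) (Fin ny) ℝ) (hD₁ : D₁ = Ginv)
    (Bf : Matrix (Fin n) (Fin nu) ℝ) (hBf : Bf = Bt - E * Ginv * D)
    (Kf : Matrix (Fin n) (Fin ny) ℝ) (hKf : Kf = K + E * Ginv)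
    (Df1 : Matrix (Fin nf) (Fin nu) ℝ) (hDf1 : Df1 = -(Ginv * D)) :
    ∀ L : ℕ, 1 ≤ L →
      TL L Φ₁ B₁ C₁ D₁ *
        TL L Φ (Matrix.fromCols Bt K) (-C)
          (Matrix.fromCols (-D) (1 : Matrix (Fin ny) (Fin ny) ℝ)) =
      TL L Φ₁ (Matrix.fromCols Bf Kf) C₁ (Matrix.fromCols Df1 D₁) := by
  intro L _
  have hA : Φ₁ = Φ + B₁ * -C := by rw [hΦ₁, hB₁, Matrix.mul_neg, ← sub_eq_add_neg]
  have hC : C₁ = D₁ * -C := by rw [hC₁, hD₁, Matrix.mul_neg]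
  have hB : fromCols Bt K + B₁ * fromCols (-D) 1 = fromCols Bf Kf := by
    rw [mul_fromCols, hBf, hKf, hB₁]
    ext i (j | j) <;> simp [sub_eq_add_neg]
  have hD : D₁ * fromCols (-D) 1 = fromCols Df1 D₁ := by
    rw [mul_fromCols, Matrix.mul_neg, Matrix.mul_one, hD₁, hDf1]
  simp only [TL_eq_blockToeplitz, blockToeplitz_mul_blockToeplitz,
    sum_antidiagonal_markovParameter_mul hA hC, hB, hD]

/-- **The Toeplitz matrix `R_L = G_L · T_L^z`:**
`T_L(Φ₁,B₁,C₁,D₁) · T_L(Φ,[B̃ K],−C,[−D I]) = T_L(Φ₁,[B_f K_f],C₁,[D_{f,1} D₁])`. -/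
theorem stmt13 (n nu nf ny : ℕ) (hn : 0 < n) (hnu : 0 < nu) (hnf : 0 < nf) (hny : 0 < ny)
    (Φ : Matrix (Fin n) (Fin n) ℝ) (Bt : Matrix (Fin n) (Fin nu) ℝ)
    (E : Matrix (Fin n) (Fin nf) ℝ) (K : Matrix (Fin n) (Fin ny) ℝ)
    (C : Matrix (Fin ny) (Fin n) ℝ) (D : Matrix (Fin ny) (Fin nu) ℝ)
    (G : Matrix (Fin ny) (Fin nf) ℝ)
    (Ginv : Matrix (Fin nf) (Fin ny) ℝ) (hG : Ginv * G = 1)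
    (Φ₁ : Matrix (Fin n) (Fin n) ℝ) (hΦ₁ : Φ₁ = Φ - E * Ginv * C)
    (B₁ : Matrix (Fin n) (Fin ny) ℝ) (hB₁ : B₁ = E * Ginv)
    (C₁ : Matrix (Fin nf) (Fin n) ℝ) (hC₁ : C₁ = -(Ginv * C))
    (D₁ : Matrix (Fin nf) (Fin ny) ℝ) (hD₁ : D₁ = Ginv)
    (Bf : Matrix (Fin n) (Fin nu) ℝ) (hBf : Bf = Bt - E * Ginv * D)
    (Kf : Matrix (Fin n) (Fin ny) ℝ) (hKf : Kf = K + E * Ginv)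
    (Df1 : Matrix (Fin nf) (Fin nu) ℝ) (hDf1 : Df1 = -(Ginv * D)) :
    ∀ L : ℕ, 1 ≤ L →
      TL L Φ₁ B₁ C₁ D₁ *
        TL L Φ (Matrix.fromCols Bt K) (-C)
          (Matrix.fromCols (-D) (1 : Matrix (Fin ny) (Fin ny) ℝ)) =
      TL L Φ₁ (Matrix.fromCols Bf Kf) C₁ (Matrix.fromCols Df1 D₁) :=
  stmt13_general n nu nf ny Φ Bt E K C D Ginv Φ₁ hΦ₁ B₁ hB₁ C₁ hC₁ D₁ hD₁ Bf hBf Kf hKf Df1 hDf1
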